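/- Let φ(x,y) = ε(x² + xy + y² - 1) with ε > 0, and let (x(t), y(t)) be a solution of ẋ = y, ẏ = -x - yφ(x,y) defined on [0,∞) with x(0)² + y(0)² ≤ 2. Then x(t)² + y(t)² ≤ 2 for all t ≥ 0. -/

import Mathlib

/-!
`V = x² + y²` has derivative `-2εy²(x² + xy + y² - 1)` along solutions, and
`x² + xy + y² ≥ (x² + y²)/2`, so `V` cannot increase while `V ≥ 2`. A function that starts
at most `c` and cannot increase while it is at least `c` stays at most `c`: compare it with the
barriers `c + δ (t - a)`, which it can only touch with a smaller slope.
-/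

lemma le_of_hasDerivAt_nonpos_of_le {f f' : ℝ → ℝ} {a c : ℝ}
    (hf : ∀ t, a ≤ t → HasDerivAt f (f' t) t)
    (hf' : ∀ t, a ≤ t → c ≤ f t → f' t ≤ 0)
    (ha : f a ≤ c) : ∀ t, a ≤ t → f t ≤ c := by
  intro t ht
  have barrier : ∀ δ > 0, f t ≤ c + δ * (t - a) := by
    intro δ hδ
    refine image_le_of_deriv_right_lt_deriv_boundary (B := fun s => c + δ * (s - a))
      (fun s hs => (hf s hs.1).continuousAt.continuousWithinAt)
      (fun s hs => (hf s hs.1).hasDerivWithinAt) (by simpa using ha)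
      (fun s => ((hasDerivAt_id s).sub_const a).const_mul δ |>.const_add c |>.congr_deriv
        (mul_one δ)) (fun s hs hfs => ?_) ⟨ht, le_rfl⟩
    have hcs : c ≤ f s := by nlinarith [hs.1]
    linarith [hf' s hs.1 hcs]
  refine le_of_forall_pos_le_add fun ε hε => ?_
  have hta : 0 < t - a + 1 := by linarith
  calc f t ≤ c + ε / (t - a + 1) * (t - a) := barrier _ (div_pos hε hta)
    _ ≤ c + ε := by
      rw [div_mul_eq_mul_div, add_le_add_iff_left, div_le_iff₀ hta]
      nlinarith

lemma sq_add_sq_div_two_le (x y : ℝ) : (x ^ 2 + y ^ 2) / 2 ≤ x ^ 2 + x * y + y ^ 2 := by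
  nlinarith [sq_nonneg (x + y)]

/-- For φ = ε(x² + xy + y² - 1), ε > 0, the disk of radius √2 is positively
    invariant for the system ẋ = y, ẏ = -x - y·φ(x,y). -/
theorem stmt_14 (ε : ℝ) (hε : 0 < ε)
    (φ : ℝ × ℝ → ℝ)
    (hφ : φ = fun p => ε * (p.1 ^ 2 + p.1 * p.2 + p.2 ^ 2 - 1))
    (x y : ℝ → ℝ)
    (hx : ∀ t : ℝ, 0 ≤ t → HasDerivAt x (y t) t)
    (hy : ∀ t : ℝ, 0 ≤ t → HasDerivAt y (-(x t) - y t * φ (x t, y t)) t)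
    (h0 : x 0 ^ 2 + y 0 ^ 2 ≤ 2) :
    ∀ t : ℝ, 0 ≤ t → x t ^ 2 + y t ^ 2 ≤ 2 := by
  subst hφ
  set q := fun t => x t ^ 2 + x t * y t + y t ^ 2 - 1
  have hV : ∀ t, 0 ≤ t →
      HasDerivAt (fun t => x t ^ 2 + y t ^ 2) (-2 * ε * (y t ^ 2 * q t)) t := fun t ht =>
    ((hx t ht).pow 2).add ((hy t ht).pow 2) |>.congr_deriv (by simp only [q]; ring)
  refine le_of_hasDerivAt_nonpos_of_le hV (fun t _ hVt => ?_) h0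
  have hq : 0 ≤ q t := by linarith [sq_add_sq_div_two_le (x t) (y t)]
  have : 0 ≤ ε * (y t ^ 2 * q t) := by positivity
  linarith
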